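/- Let n ≥ 1, let A ∈ ℝ^{n×n} be symmetric, let D ∈ ℝ^{n×n} be diagonal, and let r > 0 be such that D + (r²−1)I is positive definite. Then the number of eigenvalues (counted with multiplicity) of the symmetric regularized Laplacian L^{sym}_{r²−1} = (D+(r²−1)I)^{-1/2} A (D+(r²−1)I)^{-1/2} that are strictly greater than 1/r is equal to the number of strictly negative eigenvalues (counted with multiplicity) of the Bethe-Hessian H_r = (r²−1)I + D − rA. -/

import Mathlib

open Matrix

/-- The positive semidefinite square root of a positive semidefinite matrix (the definition
`Matrix.PosSemidef.sqrt` of the older Mathlib, since removed, restated verbatim). -/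
noncomputable def Matrix.PosSemidef.sqrt {m : Type*} [Fintype m] [DecidableEq m] {𝕜 : Type*} [RCLike 𝕜]
    [PartialOrder 𝕜] [StarOrderedRing 𝕜]
    {M : Matrix m m 𝕜} (hM : M.PosSemidef) : Matrix m m 𝕜 :=
  hM.1.eigenvectorUnitary.1 * diagonal ((↑) ∘ (√·) ∘ hM.1.eigenvalues) *
  (star hM.1.eigenvectorUnitary : Matrix m m 𝕜)

/-- The number of eigenvalues of a real matrix `B`, counted with multiplicity, that are
strictly greater than `θ`. Junk value `0` if `B` is not symmetric. -/
noncomputable def countEigGT {n : ℕ} (B : Matrix (Fin n) (Fin n) ℝ) (θ : ℝ) : ℕ :=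
  if hB : B.IsHermitian then (Finset.univ.filter fun i => θ < hB.eigenvalues i).card else 0

/-- The number of eigenvalues of a real matrix `B`, counted with multiplicity, that are
strictly negative. Junk value `0` if `B` is not symmetric. -/
noncomputable def countEigNeg {n : ℕ} (B : Matrix (Fin n) (Fin n) ℝ) : ℕ :=
  if hB : B.IsHermitian then (Finset.univ.filter fun i => hB.eigenvalues i < 0).card else 0

/-!
Write `M = D + (r²-1)I = S²` with `S` the symmetric square root and `L = S⁻¹AS⁻¹`. Then
`H_r = S² - rA = S (I - rL) S`, so by Sylvester's law of inertia `H_r` has as many negative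
eigenvalues as `I - rL`, whose eigenvalues are `1 - rλ` for the eigenvalues `λ` of `L`; for
`r > 0`, `1 - rλ < 0` exactly when `λ > 1/r`.
-/

open Finset QuadraticMap

namespace Matrix

variable {m : Type*} [Fintype m] [DecidableEq m]

namespace PosSemidef

variable {M : Matrix m m ℝ}

lemma sqrt_eq_conjStarAlgAut (hM : M.PosSemidef) : hM.sqrt =
    Unitary.conjStarAlgAut ℝ _ hM.1.eigenvectorUnitary (diagonal fun i => √(hM.1.eigenvalues i)) :=
  rfl

lemma sqrt_mul_self (hM : M.PosSemidef) : hM.sqrt * hM.sqrt = M := by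
  conv_rhs => rw [hM.1.spectral_theorem]
  rw [sqrt_eq_conjStarAlgAut, ← map_mul, diagonal_mul_diagonal]
  congr 2
  ext i
  simp [Real.mul_self_sqrt (hM.eigenvalues_nonneg i)]

lemma transpose_sqrt (hM : M.PosSemidef) : hM.sqrtᵀ = hM.sqrt := by
  rw [sqrt_eq_conjStarAlgAut]
  exact isHermitian_iff_isSymm.mp
    ((isHermitian_diagonal _).isSelfAdjoint.map (Unitary.conjStarAlgAut ℝ _ _)).isHermitian

end PosSemidef

lemma PosDef.isUnit_sqrt {M : Matrix m m ℝ} (hM : M.PosDef) : IsUnit hM.posSemidef.sqrt := by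
  have h := hM.isUnit
  rw [← hM.posSemidef.sqrt_mul_self, isUnit_iff_isUnit_det, det_mul, IsUnit.mul_iff] at h
  exact (isUnit_iff_isUnit_det _).mpr h.1

lemma toQuadraticForm'_apply {R : Type*} [CommRing R] (B : Matrix m m R) (x : m → R) :
    B.toQuadraticForm' x = x ⬝ᵥ B *ᵥ x := by
  simp [toQuadraticForm', toLinearMap₂'_apply']

lemma toQuadraticForm'_mul_diagonal_mul_transpose {R : Type*} [CommRing R]
    (C : Matrix m m R) (d : m → R) :
    (C * diagonal d * Cᵀ).toQuadraticForm' = (weightedSumSquares R d).comp Cᵀ.mulVecLin := by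
  ext x
  rw [toQuadraticForm'_apply, QuadraticMap.comp_apply, weightedSumSquares_apply, Matrix.mul_assoc,
    ← mulVec_mulVec, dotProduct_mulVec, ← mulVec_transpose, ← mulVec_mulVec]
  simp only [dotProduct, mulVec_diagonal, mulVecLin_apply, smul_eq_mul]
  exact Finset.sum_congr rfl fun _ _ => by ring

lemma equivalent_weightedSumSquares_of_eq_mul_diagonal_mul_transpose {R : Type*} [CommRing R]
    {B C : Matrix m m R} (hC : IsUnit C) {d : m → R} (h : B = C * diagonal d * Cᵀ) :
    B.toQuadraticForm'.Equivalent (weightedSumSquares R d) := by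
  let := ((isUnit_transpose C).mpr hC).invertible
  rw [h, toQuadraticForm'_mul_diagonal_mul_transpose]
  exact ⟨(isometryEquivOfCompLinearEquiv _ (Cᵀ.toLinearEquiv' ‹_›)).symm⟩

namespace IsHermitian

variable {B : Matrix m m ℝ} (hB : B.IsHermitian)

lemma eq_eigenvectorUnitary_mul_diagonal_mul_transpose :
    B = (hB.eigenvectorUnitary : Matrix m m ℝ) * diagonal hB.eigenvalues *
      (hB.eigenvectorUnitary : Matrix m m ℝ)ᵀ := by
  conv_lhs => rw [hB.spectral_theorem, Unitary.conjStarAlgAut_apply]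
  simp [star_eq_conjTranspose, conjTranspose_eq_transpose_of_trivial]

lemma one_sub_smul_eq (c : ℝ) :
    1 - c • B = (hB.eigenvectorUnitary : Matrix m m ℝ) *
      diagonal (fun i => 1 - c * hB.eigenvalues i) * (hB.eigenvectorUnitary : Matrix m m ℝ)ᵀ := by
  have hUUt : (hB.eigenvectorUnitary : Matrix m m ℝ) *
      (hB.eigenvectorUnitary : Matrix m m ℝ)ᵀ = 1 := by
    simpa [star_eq_conjTranspose] using Unitary.coe_mul_star_self hB.eigenvectorUnitary
  have hdiag : diagonal (fun i => 1 - c * hB.eigenvalues i) = 1 - c • diagonal hB.eigenvalues := by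
    rw [← diagonal_one, ← diagonal_smul, diagonal_sub]
    rfl
  conv_lhs => rw [hB.eq_eigenvectorUnitary_mul_diagonal_mul_transpose, ← hUUt]
  rw [hdiag, Matrix.mul_sub, Matrix.sub_mul, Matrix.mul_one, mul_smul_comm, smul_mul_assoc]

lemma card_eigenvalues_neg_eq_of_eq_mul_diagonal_mul_transpose {C : Matrix m m ℝ} (hC : IsUnit C)
    {d : m → ℝ} (h : B = C * diagonal d * Cᵀ) :
    #{i | hB.eigenvalues i < 0} = #{i | d i < 0} := by
  have hB_sig := QuadraticForm.sigNeg_of_equiv_weightedSumSquares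
    (equivalent_weightedSumSquares_of_eq_mul_diagonal_mul_transpose Unitary.isUnit_coe
      hB.eq_eigenvectorUnitary_mul_diagonal_mul_transpose)
  have hd_sig := QuadraticForm.sigNeg_of_equiv_weightedSumSquares
    (equivalent_weightedSumSquares_of_eq_mul_diagonal_mul_transpose hC h)
  simpa [Set.ncard_eq_toFinset_card'] using hB_sig.symm.trans hd_sig

lemma card_eigenvalues_neg_eq_of_eq_mul_mul_transpose {H S : Matrix m m ℝ} (hH : H.IsHermitian)
    (hS : IsUnit S) (h : H = S * B * Sᵀ) :
    #{i | hH.eigenvalues i < 0} = #{i | hB.eigenvalues i < 0} := by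
  refine hH.card_eigenvalues_neg_eq_of_eq_mul_diagonal_mul_transpose
    (hS.mul (Unitary.isUnit_coe (U := hB.eigenvectorUnitary))) ?_
  conv_lhs => rw [h, hB.eq_eigenvectorUnitary_mul_diagonal_mul_transpose]
  simp only [transpose_mul, Matrix.mul_assoc]

lemma card_eigenvalues_one_sub_smul_neg (c : ℝ) (h : (1 - c • B).IsHermitian) :
    #{i | h.eigenvalues i < 0} = #{i | 1 - c * hB.eigenvalues i < 0} :=
  h.card_eigenvalues_neg_eq_of_eq_mul_diagonal_mul_transpose Unitary.isUnit_coe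
    (hB.one_sub_smul_eq c)

end IsHermitian

end Matrix

theorem count_regSymLaplacian_gt_eq_count_betheHessian_neg_general
    (n : ℕ)
    (A D : Matrix (Fin n) (Fin n) ℝ)
    (hA : Aᵀ = A)
    (r : ℝ) (hr : 0 < r)
    (hM : (D + (r ^ 2 - 1) • (1 : Matrix (Fin n) (Fin n) ℝ)).PosDef) :
    countEigGT ((hM.posSemidef.sqrt)⁻¹ * A * (hM.posSemidef.sqrt)⁻¹) (1 / r) =
      countEigNeg ((r ^ 2 - 1) • (1 : Matrix (Fin n) (Fin n) ℝ) + D - r • A) := by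
  set S := hM.posSemidef.sqrt
  have hSt : Sᵀ = S := hM.posSemidef.transpose_sqrt
  have hdet : IsUnit S.det := (isUnit_iff_isUnit_det S).mp hM.isUnit_sqrt
  have hL : (S⁻¹ * A * S⁻¹).IsHermitian := by
    rw [isHermitian_iff_isSymm, IsSymm, transpose_mul, transpose_mul, transpose_nonsing_inv, hSt,
      hA, Matrix.mul_assoc]
  have hH_eq : (r ^ 2 - 1) • (1 : Matrix (Fin n) (Fin n) ℝ) + D - r • A = S * S - r • A := by
    rw [hM.posSemidef.sqrt_mul_self]
    abel
  have hH : ((r ^ 2 - 1) • (1 : Matrix (Fin n) (Fin n) ℝ) + D - r • A).IsHermitian := by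
    rw [hH_eq, isHermitian_iff_isSymm, IsSymm, transpose_sub, transpose_mul, transpose_smul, hSt, hA]
  have hH_congr : (r ^ 2 - 1) • (1 : Matrix (Fin n) (Fin n) ℝ) + D - r • A =
      S * (1 - r • (S⁻¹ * A * S⁻¹)) * Sᵀ := by
    rw [hH_eq, hSt, Matrix.mul_sub, Matrix.sub_mul, Matrix.mul_one, mul_smul_comm, smul_mul_assoc,
      ← Matrix.mul_assoc S (S⁻¹ * A), nonsing_inv_mul_cancel_right S _ hdet,
      mul_nonsing_inv_cancel_left S _ hdet]
  have hIL : (1 - r • (S⁻¹ * A * S⁻¹)).IsHermitian := isHermitian_one.sub (hL.smul (.all r))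
  unfold countEigGT countEigNeg
  rw [dif_pos hL, dif_pos hH,
    hIL.card_eigenvalues_neg_eq_of_eq_mul_mul_transpose hH hM.isUnit_sqrt hH_congr,
    hL.card_eigenvalues_one_sub_smul_neg r hIL]
  congr 1
  ext i
  rw [mem_filter, mem_filter, sub_neg, div_lt_iff₀ hr, mul_comm]

/-- For symmetric `A`, diagonal `D`, `r > 0` with `D + (r²−1)I` positive
definite, the number of eigenvalues (with multiplicity) of the symmetric regularized
Laplacian `L^{sym}_{r²−1} = (D+(r²−1)I)^{-1/2} A (D+(r²−1)I)^{-1/2}` strictly greater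
than `1/r` equals the number of strictly negative eigenvalues (with multiplicity) of the
Bethe-Hessian `H_r = (r²−1)I + D − rA`. -/
theorem count_regSymLaplacian_gt_eq_count_betheHessian_neg
    (n : ℕ) (hn : 1 ≤ n)
    (A D : Matrix (Fin n) (Fin n) ℝ)
    (hA : Aᵀ = A) (hD : D.IsDiag)
    (r : ℝ) (hr : 0 < r)
    (hM : (D + (r ^ 2 - 1) • (1 : Matrix (Fin n) (Fin n) ℝ)).PosDef) :
    countEigGT ((hM.posSemidef.sqrt)⁻¹ * A * (hM.posSemidef.sqrt)⁻¹) (1 / r) =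
      countEigNeg ((r ^ 2 - 1) • (1 : Matrix (Fin n) (Fin n) ℝ) + D - r • A) :=
  count_regSymLaplacian_gt_eq_count_betheHessian_neg_general n A D hA r hr hM
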